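/- arXiv:1912.10770 — 4 statements merged into one kernel-verified Lean document; each statement's English description precedes it below -/
import Mathlib

section
/- In the setting of the open-loop estimator, for each time t the interval [c_x(t) − p_x(t), c_x(t) + p_x(t)] is the tightest interval containing the reachable set { A^t x_0 + Σ_{k=0}^{t−1} A^{t−1−k} B w_k : underline_x(0) ≤ x_0 ≤ overline_x(0), underline_w(k) ≤ w_k ≤ overline_w(k) }. -/
open Matrix Finset

noncomputable section

/-- Entrywise absolute value of a matrix. -/
def entAbs {m n : Type*} (A : Matrix m n ℝ) : Matrix m n ℝ := fun i j => |A i j|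

private lemma pick_bound (r l u x : ℝ) (h1 : l ≤ x) (h2 : x ≤ u) :
    |r * x - r * ((u + l) / 2)| ≤ |r| * ((u - l) / 2) := by
  rw [← mul_sub, abs_mul]
  exact mul_le_mul_of_nonneg_left (abs_le.2 ⟨by linarith, by linarith⟩) (abs_nonneg r)

private lemma pick_max (r l u : ℝ) (h : l ≤ u) :
    r * (if 0 ≤ r then u else l) = r * ((u + l) / 2) + |r| * ((u - l) / 2) := by
  rcases le_or_gt 0 r with hr | hr
  · simp [hr, abs_of_nonneg hr]; ring
  · simp [not_le.2 hr, abs_of_neg hr]; ring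

private lemma pick_min (r l u : ℝ) (h : l ≤ u) :
    r * (if 0 ≤ r then l else u) = r * ((u + l) / 2) - |r| * ((u - l) / 2) := by
  rcases le_or_gt 0 r with hr | hr
  · simp [hr, abs_of_nonneg hr]; ring
  · simp [not_le.2 hr, abs_of_neg hr]; ring

private lemma mv_bound {p q : ℕ} (M : Matrix (Fin p) (Fin q) ℝ) (l u v : Fin q → ℝ)
    (h1 : l ≤ v) (h2 : v ≤ u) (i : Fin p) :
    |(M *ᵥ v) i - (M *ᵥ ((u + l) / 2)) i| ≤ (entAbs M *ᵥ ((u - l) / 2)) i := by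
  simp only [Matrix.mulVec, dotProduct, entAbs, Pi.div_apply, Pi.add_apply,
    Pi.sub_apply, ← Finset.sum_sub_distrib]
  exact (Finset.abs_sum_le_sum_abs _ _).trans
    (Finset.sum_le_sum fun j _ => pick_bound _ _ _ _ (h1 j) (h2 j))

private lemma mv_pick_max {p q : ℕ} (M : Matrix (Fin p) (Fin q) ℝ) (l u : Fin q → ℝ)
    (h : l ≤ u) (i : Fin p) :
    (M *ᵥ (fun j => if 0 ≤ M i j then u j else l j)) i =
      (M *ᵥ ((u + l) / 2)) i + (entAbs M *ᵥ ((u - l) / 2)) i := by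
  simp only [Matrix.mulVec, dotProduct, entAbs, Pi.div_apply, Pi.add_apply,
    Pi.sub_apply, ← Finset.sum_add_distrib]
  exact Finset.sum_congr rfl fun j _ => pick_max _ _ _ (h j)

private lemma mv_pick_min {p q : ℕ} (M : Matrix (Fin p) (Fin q) ℝ) (l u : Fin q → ℝ)
    (h : l ≤ u) (i : Fin p) :
    (M *ᵥ (fun j => if 0 ≤ M i j then l j else u j)) i =
      (M *ᵥ ((u + l) / 2)) i - (entAbs M *ᵥ ((u - l) / 2)) i := by
  simp only [Matrix.mulVec, dotProduct, entAbs, Pi.div_apply, Pi.add_apply,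
    Pi.sub_apply, ← Finset.sum_sub_distrib]
  exact Finset.sum_congr rfl fun j _ => pick_min _ _ _ (h j)

theorem open_loop_tightest {n nw : ℕ}
    (A : Matrix (Fin n) (Fin n) ℝ) (B : Matrix (Fin n) (Fin nw) ℝ)
    (xl0 xu0 : Fin n → ℝ) (wl wu : ℕ → Fin nw → ℝ)
    (hx0 : xl0 ≤ xu0) (hw : ∀ k, wl k ≤ wu k) (t : ℕ) :
    let cx0 := (xu0 + xl0) / 2; let px0 := (xu0 - xl0) / 2
    let cw := fun k => (wu k + wl k) / 2; let pw := fun k => (wu k - wl k) / 2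
    let cx := (A ^ t) *ᵥ cx0 + ∑ k ∈ Finset.range t, (A ^ (t - 1 - k) * B) *ᵥ cw k
    let px := entAbs (A ^ t) *ᵥ px0 +
      ∑ k ∈ Finset.range t, entAbs (A ^ (t - 1 - k) * B) *ᵥ pw k
    let S : Set (Fin n → ℝ) := {x | ∃ x0 : Fin n → ℝ, ∃ w : ℕ → Fin nw → ℝ,
      xl0 ≤ x0 ∧ x0 ≤ xu0 ∧ (∀ k, wl k ≤ w k ∧ w k ≤ wu k) ∧
      x = (A ^ t) *ᵥ x0 + ∑ k ∈ Finset.range t, (A ^ (t - 1 - k) * B) *ᵥ w k}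
    S ⊆ Set.Icc (cx - px) (cx + px) ∧
      ∀ a b : Fin n → ℝ, S ⊆ Set.Icc a b → Set.Icc (cx - px) (cx + px) ⊆ Set.Icc a b := by
  intro cx0 px0 cw pw cx px S
  -- main bound for points of S
  have hsub : S ⊆ Set.Icc (cx - px) (cx + px) := by
    rintro x ⟨x0, w, h1, h2, h3, rfl⟩
    have key : ∀ i, |((A ^ t) *ᵥ x0 + ∑ k ∈ Finset.range t, (A ^ (t - 1 - k) * B) *ᵥ w k) i
        - cx i| ≤ px i := by
      intro i
      have e1 : ((A ^ t) *ᵥ x0 + ∑ k ∈ Finset.range t, (A ^ (t - 1 - k) * B) *ᵥ w k) i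
          - cx i = (((A ^ t) *ᵥ x0) i - ((A ^ t) *ᵥ cx0) i) +
            ∑ k ∈ Finset.range t,
              (((A ^ (t - 1 - k) * B) *ᵥ w k) i - ((A ^ (t - 1 - k) * B) *ᵥ cw k) i) := by
        simp only [cx, Pi.add_apply, Finset.sum_apply, Finset.sum_sub_distrib]
        ring
      rw [e1]
      have e2 : px i = (entAbs (A ^ t) *ᵥ px0) i +
          ∑ k ∈ Finset.range t, (entAbs (A ^ (t - 1 - k) * B) *ᵥ pw k) i := by
        simp [px]
      rw [e2]
      refine (abs_add_le _ _).trans (add_le_add (mv_bound _ _ _ _ h1 h2 i) ?_)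
      refine (Finset.abs_sum_le_sum_abs _ _).trans (Finset.sum_le_sum fun k _ => ?_)
      exact mv_bound _ _ _ _ (h3 k).1 (h3 k).2 i
    constructor <;> intro i <;> have := key i <;>
      simp only [Pi.sub_apply, Pi.add_apply] at * <;>
      [linarith [(abs_le.1 this).1]; linarith [(abs_le.1 this).2]]
  refine ⟨hsub, ?_⟩
  -- extreme points: for each i, points of S attaining cx i ± px i
  have hmax : ∀ i : Fin n, ∃ x ∈ S, x i = cx i + px i := by
    intro i
    refine ⟨_, ⟨fun j => if 0 ≤ (A ^ t) i j then xu0 j else xl0 j,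
      fun k j => if 0 ≤ (A ^ (t - 1 - k) * B) i j then wu k j else wl k j,
      fun j => ?_, fun j => ?_, fun k => ⟨fun j => ?_, fun j => ?_⟩, rfl⟩, ?_⟩
    · dsimp only; split <;> [exact hx0 j; exact le_rfl]
    · dsimp only; split <;> [exact le_rfl; exact hx0 j]
    · dsimp only; split <;> [exact hw k j; exact le_rfl]
    · dsimp only; split <;> [exact le_rfl; exact hw k j]
    · simp only [Pi.add_apply, Finset.sum_apply]
      rw [mv_pick_max _ _ _ hx0 i]
      have : ∀ k ∈ Finset.range t,
          ((A ^ (t - 1 - k) * B) *ᵥ fun j =>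
            if 0 ≤ (A ^ (t - 1 - k) * B) i j then wu k j else wl k j) i =
          ((A ^ (t - 1 - k) * B) *ᵥ cw k) i + (entAbs (A ^ (t - 1 - k) * B) *ᵥ pw k) i :=
        fun k _ => mv_pick_max _ _ _ (hw k) i
      rw [Finset.sum_congr rfl this, Finset.sum_add_distrib]
      simp only [cx, px, Pi.add_apply, Finset.sum_apply]
      ring
  have hmin : ∀ i : Fin n, ∃ x ∈ S, x i = cx i - px i := by
    intro i
    refine ⟨_, ⟨fun j => if 0 ≤ (A ^ t) i j then xl0 j else xu0 j,
      fun k j => if 0 ≤ (A ^ (t - 1 - k) * B) i j then wl k j else wu k j,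
      fun j => ?_, fun j => ?_, fun k => ⟨fun j => ?_, fun j => ?_⟩, rfl⟩, ?_⟩
    · dsimp only; split <;> [exact le_rfl; exact hx0 j]
    · dsimp only; split <;> [exact hx0 j; exact le_rfl]
    · dsimp only; split <;> [exact le_rfl; exact hw k j]
    · dsimp only; split <;> [exact hw k j; exact le_rfl]
    · simp only [Pi.add_apply, Finset.sum_apply]
      rw [mv_pick_min _ _ _ hx0 i]
      have : ∀ k ∈ Finset.range t,
          ((A ^ (t - 1 - k) * B) *ᵥ fun j =>
            if 0 ≤ (A ^ (t - 1 - k) * B) i j then wl k j else wu k j) i =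
          ((A ^ (t - 1 - k) * B) *ᵥ cw k) i - (entAbs (A ^ (t - 1 - k) * B) *ᵥ pw k) i :=
        fun k _ => mv_pick_min _ _ _ (hw k) i
      rw [Finset.sum_congr rfl this, Finset.sum_sub_distrib]
      simp only [cx, px, Pi.add_apply, Pi.sub_apply, Finset.sum_apply]
      ring
  intro a b hab z hz
  obtain ⟨hz1, hz2⟩ := hz
  refine ⟨fun i => ?_, fun i => ?_⟩
  · obtain ⟨x, hxS, hxi⟩ := hmin i
    have := (hab hxS).1 i
    have hz1i := hz1 i
    simp only [Pi.sub_apply] at hz1i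
    linarith [hxi ▸ this]
  · obtain ⟨x, hxS, hxi⟩ := hmax i
    have := (hab hxS).2 i
    have hz2i := hz2 i
    simp only [Pi.add_apply] at hz2i
    linarith [hxi ▸ this]
end
end

section
/- Let A ∈ ℝ^{n×n}, C ∈ ℝ^{n_y×n}. Suppose there exist a diagonal positive definite matrix P ∈ ℝ^{n×n} with nonnegative entries, Y ∈ ℝ^{n×n_y}, and an entrywise-nonnegative X ∈ ℝ^{n×n} such that the block matrix [[P, X],[Xᵀ, P]] is positive definite and |P A − Y C| ≤ X componentwise. Then L = P^{-1} Y satisfies ρ(|A − L C|) < 1. -/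
/-!
Write `P = diagonal d` with `d > 0`, so that `|A - P⁻¹ Y C| = P⁻¹ |P A - Y C| ≤ P⁻¹ X` entrywise.
If `M v = μ v` for a complex eigenpair of a matrix `M` with `|M| ≤ P⁻¹ X`, then `u = |v|` satisfies
`‖μ‖ u ≤ P⁻¹ X u` entrywise; as `P` is a positive diagonal weight this gives
`‖μ‖² uᵀ P u ≤ (X u)ᵀ P⁻¹ (X u)`. The Schur complement `P - Xᵀ P⁻¹ X` of the block matrix is
positive definite, so the right-hand side is `< uᵀ P u`, whence `‖μ‖ < 1`.
-/

open Matrix Finset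

noncomputable section

/-- Spectral radius of a real matrix, via its complex spectrum. -/
def specRad {n : Type*} [Fintype n] [DecidableEq n] (A : Matrix n n ℝ) : ENNReal :=
  spectralRadius ℂ (A.map (algebraMap ℝ ℂ))

open scoped NNReal

namespace spectrum

theorem spectralRadius_lt_of_finite {𝕜 A : Type*} [NormedField 𝕜] [Ring A] [Algebra 𝕜 A]
    {a : A} (hfin : (spectrum 𝕜 a).Finite) {r : ℝ≥0} (hr : 0 < r)
    (h : ∀ k ∈ spectrum 𝕜 a, ‖k‖₊ < r) : spectralRadius 𝕜 a < r :=
  (iSup₂_le fun _ hk => ENNReal.coe_le_coe.2 (Finset.le_sup (hfin.mem_toFinset.2 hk))).trans_lt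
    (ENNReal.coe_lt_coe.2 ((Finset.sup_lt_iff hr).2 fun k hk => h k (hfin.mem_toFinset.1 hk)))

end spectrum

namespace Matrix

variable {n : Type*} [Fintype n]

theorem norm_mul_norm_le_of_mulVec_eq_smul {𝕜 : Type*} [NormedDivisionRing 𝕜]
    {M : Matrix n n 𝕜} {v : n → 𝕜} {μ : 𝕜} (h : M *ᵥ v = μ • v) (i : n) :
    ‖μ‖ * ‖v i‖ ≤ ∑ j, ‖M i j‖ * ‖v j‖ :=
  calc ‖μ‖ * ‖v i‖ = ‖∑ j, M i j * v j‖ := by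
        rw [← norm_mul, ← smul_eq_mul, ← Pi.smul_apply, ← h]; rfl
    _ ≤ ∑ j, ‖M i j‖ * ‖v j‖ := (norm_sum_le _ _).trans (sum_le_sum fun j _ => norm_mul_le _ _)

variable [DecidableEq n]

theorem exists_mulVec_eq_smul_of_mem_spectrum {K : Type*} [Field K] {M : Matrix n n K} {μ : K}
    (h : μ ∈ spectrum K M) : ∃ v ≠ 0, M *ᵥ v = μ • v := by
  rw [← spectrum_toLin'] at h
  obtain ⟨v, hv⟩ := (Module.End.hasEigenvalue_iff_mem_spectrum.2 h).exists_hasEigenvector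
  exact ⟨v, hv.2, by simpa using hv.apply_eq_smul⟩

theorem dotProduct_mulVec_lt_of_posDef_fromBlocks {P X Q : Matrix n n ℝ} (hP : P.PosDef)
    (hblk : (fromBlocks P X Xᵀ Q).PosDef) {u : n → ℝ} (hu : u ≠ 0) :
    X *ᵥ u ⬝ᵥ P⁻¹ *ᵥ (X *ᵥ u) < u ⬝ᵥ Q *ᵥ u := by
  have := hP.isUnit.invertible
  have hz : -((P⁻¹ * X) *ᵥ u) ⊕ᵥ u ≠ 0 := fun h => hu (funext fun i => congrFun h (Sum.inr i))
  have h := hblk.dotProduct_mulVec_pos hz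
  rw [dotProduct_mulVec, ← conjTranspose_eq_transpose_of_trivial,
    schur_complement_eq₁₁ X Q _ u hP.1, neg_add_cancel] at h
  simp only [star_trivial, zero_vecMul, zero_dotProduct, zero_add, vecMul_sub, sub_dotProduct,
    ← dotProduct_mulVec, sub_pos] at h
  rwa [← mulVec_mulVec, ← mulVec_mulVec, dotProduct_mulVec,
    conjTranspose_eq_transpose_of_trivial, vecMul_transpose] at h

theorem dotProduct_diagonal_mulVec_le {d a b : n → ℝ} (hd : ∀ i, 0 ≤ d i) (ha : 0 ≤ a)
    (hab : a ≤ b) : a ⬝ᵥ diagonal d *ᵥ a ≤ b ⬝ᵥ diagonal d *ᵥ b := by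
  simp only [dotProduct, mulVec_diagonal]
  exact sum_le_sum fun i _ => mul_le_mul (hab i) (mul_le_mul_of_nonneg_left (hab i) (hd i))
    (mul_nonneg (hd i) (ha i)) ((ha i).trans (hab i))

theorem abs_inv_diagonal_mul_apply_le {m : Type*} {d : n → ℝ} (hd : ∀ i, 0 < d i)
    {Z X : Matrix n m ℝ} (h : ∀ i j, |Z i j| ≤ X i j) (i : n) (j : m) :
    |((diagonal d)⁻¹ * Z) i j| ≤ ((diagonal d)⁻¹ * X) i j := by
  have hinv : (diagonal d)⁻¹ = diagonal d⁻¹ :=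
    inv_eq_left_inv (by simp [diagonal_mul_diagonal, fun i => (hd i).ne'])
  rw [hinv, diagonal_mul, diagonal_mul, Pi.inv_apply, abs_mul, abs_of_pos (inv_pos.2 (hd i))]
  exact mul_le_mul_of_nonneg_left (h i j) (inv_pos.2 (hd i)).le

end Matrix

theorem specRad_lt_one_of_abs_le_inv_diagonal_mul {n : Type*} [Fintype n] [DecidableEq n]
    {d : n → ℝ} (hd : ∀ i, 0 < d i) {X M : Matrix n n ℝ}
    (hblk : (fromBlocks (diagonal d) X Xᵀ (diagonal d)).PosDef)
    (hM : ∀ i j, |M i j| ≤ ((diagonal d)⁻¹ * X) i j) : specRad M < 1 := by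
  set P := diagonal d
  have hP : P.PosDef := posDef_diagonal_iff.2 hd
  refine spectrum.spectralRadius_lt_of_finite (finite_spectrum _) one_pos fun μ hμ => ?_
  obtain ⟨v, hv, hμv⟩ := exists_mulVec_eq_smul_of_mem_spectrum hμ
  set u : n → ℝ := fun i => ‖v i‖
  have hu : u ≠ 0 := fun h => hv (funext fun i => norm_eq_zero.1 (congrFun h i))
  have hbound : ‖μ‖ • u ≤ P⁻¹ *ᵥ (X *ᵥ u) := fun i =>
    calc ‖μ‖ * u i ≤ ∑ j, ‖M.map (algebraMap ℝ ℂ) i j‖ * u j :=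
          norm_mul_norm_le_of_mulVec_eq_smul hμv i
      _ ≤ ∑ j, (P⁻¹ * X) i j * u j :=
          sum_le_sum fun j _ => mul_le_mul_of_nonneg_right (by simpa using hM i j) (norm_nonneg _)
      _ = (P⁻¹ *ᵥ (X *ᵥ u)) i := by rw [mulVec_mulVec]; rfl
  have hPw : P *ᵥ (P⁻¹ *ᵥ (X *ᵥ u)) = X *ᵥ u := by
    rw [mulVec_mulVec, mul_nonsing_inv _ ((isUnit_iff_isUnit_det P).1 hP.isUnit), one_mulVec]
  have hsq : ‖μ‖ ^ 2 * (u ⬝ᵥ P *ᵥ u) < u ⬝ᵥ P *ᵥ u :=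
    calc ‖μ‖ ^ 2 * (u ⬝ᵥ P *ᵥ u) = ‖μ‖ • u ⬝ᵥ P *ᵥ (‖μ‖ • u) := by
          rw [mulVec_smul, smul_dotProduct, dotProduct_smul, smul_eq_mul, smul_eq_mul]; ring
      _ ≤ P⁻¹ *ᵥ (X *ᵥ u) ⬝ᵥ P *ᵥ (P⁻¹ *ᵥ (X *ᵥ u)) :=
          dotProduct_diagonal_mulVec_le (fun i => (hd i).le)
            (fun i => mul_nonneg (norm_nonneg μ) (norm_nonneg (v i))) hbound
      _ = X *ᵥ u ⬝ᵥ P⁻¹ *ᵥ (X *ᵥ u) := by rw [hPw, dotProduct_comm]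
      _ < u ⬝ᵥ P *ᵥ u := dotProduct_mulVec_lt_of_posDef_fromBlocks hP hblk hu
  have hμ1 : ‖μ‖ < 1 := (sq_lt_one_iff₀ (norm_nonneg μ)).1
    ((mul_lt_iff_lt_one_left (hP.dotProduct_mulVec_pos hu)).1 hsq)
  exact_mod_cast hμ1

theorem lmi_implies_abs_schur_general {n ny : ℕ}
    (A : Matrix (Fin n) (Fin n) ℝ) (C : Matrix (Fin ny) (Fin n) ℝ)
    (P : Matrix (Fin n) (Fin n) ℝ) (Y : Matrix (Fin n) (Fin ny) ℝ)
    (X : Matrix (Fin n) (Fin n) ℝ)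
    (hPdiag : P.IsDiag) (hPdef : P.PosDef)
    (hblk : (Matrix.fromBlocks P X Xᵀ P).PosDef)
    (hle : ∀ i j, |(P * A - Y * C) i j| ≤ X i j) :
    specRad (entAbs (A - P⁻¹ * Y * C)) < 1 := by
  obtain ⟨d, rfl⟩ : ∃ d, P = diagonal d := ⟨_, hPdiag.diagonal_diag.symm⟩
  have hd : ∀ i, 0 < d i := posDef_diagonal_iff.1 hPdef
  have hAZ : A - (diagonal d)⁻¹ * Y * C = (diagonal d)⁻¹ * (diagonal d * A - Y * C) := by
    rw [Matrix.mul_sub, ← Matrix.mul_assoc,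
      nonsing_inv_mul _ ((isUnit_iff_isUnit_det _).1 hPdef.isUnit), Matrix.one_mul,
      Matrix.mul_assoc]
  refine specRad_lt_one_of_abs_le_inv_diagonal_mul hd hblk fun i j => ?_
  rw [entAbs, abs_abs, hAZ]
  exact abs_inv_diagonal_mul_apply_le hd hle i j

theorem lmi_implies_abs_schur {n ny : ℕ}
    (A : Matrix (Fin n) (Fin n) ℝ) (C : Matrix (Fin ny) (Fin n) ℝ)
    (P : Matrix (Fin n) (Fin n) ℝ) (Y : Matrix (Fin n) (Fin ny) ℝ)
    (X : Matrix (Fin n) (Fin n) ℝ)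
    (hPdiag : P.IsDiag) (hPdef : P.PosDef) (hPnn : ∀ i j, 0 ≤ P i j)
    (hXnn : ∀ i j, 0 ≤ X i j)
    (hblk : (Matrix.fromBlocks P X Xᵀ P).PosDef)
    (hle : ∀ i j, |(P * A - Y * C) i j| ≤ X i j) :
    specRad (entAbs (A - P⁻¹ * Y * C)) < 1 :=
  lmi_implies_abs_schur_general A C P Y X hPdiag hPdef hblk hle
end
end

section
/- Let A ∈ ℝ^{n×n}, C ∈ ℝ^{n_y×n}, and L ∈ ℝ^{n×n_y} with ρ(|A − L C|) < 1. Then there exist a diagonal positive definite P, Y = P L, and X = |P A − Y C| such that [[P, X],[Xᵀ, P]] is positive definite and |P A − Y C| ≤ X. (Converse direction of the LMI characterization.) -/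
/-!
Write `M = |A - L C|`, a nonnegative matrix, and pick `ρ(M) < r < 1`. Gelfand's formula gives a
power with `M ^ K 1 ≤ r ^ K 1`, and the truncated Neumann sum `v = ∑_{t < K} r⁻ᵗ Mᵗ 1` is then a
vector `v ≥ 1` with `M v ≤ r v`; since `ρ(Mᵀ) = ρ(M)` there is likewise `u ≥ 1` with `Mᵀ u ≤ r u`.
For `P = diag(u / v)`, Cauchy–Schwarz gives `xᵀ Mᵀ P M x ≤ r² xᵀ P x`, so `P - Mᵀ P M` is positive
definite. With `Y = P L` we get `|P A - Y C| = P M`, and the Schur complement of `P` in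
`[[P, P M], [Mᵀ P, P]]` is exactly `P - Mᵀ P M`.
-/

open Matrix Finset

noncomputable section

open scoped NNReal ComplexOrder

namespace Matrix

variable {ι : Type*} [Fintype ι] [DecidableEq ι]

theorem spectrum_transpose {R α : Type*} [CommSemiring R] [CommRing α] [Algebra R α]
    (B : Matrix ι ι α) : spectrum R Bᵀ = spectrum R B := by
  ext a
  rw [spectrum.mem_iff, spectrum.mem_iff, ← isUnit_transpose (algebraMap R _ a - B),
    transpose_sub, algebraMap_eq_diagonal, diagonal_transpose]

theorem PosDef.fromBlocks_of_schur {κ 𝕜 : Type*} [Fintype κ] [DecidableEq κ] [RCLike 𝕜]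
    {A : Matrix ι ι 𝕜} {B : Matrix ι κ 𝕜} {D : Matrix κ κ 𝕜} (hA : A.PosDef)
    (hS : (D - Bᴴ * A⁻¹ * B).PosDef) : (fromBlocks A B Bᴴ D).PosDef := by
  have : Invertible A := hA.isUnit.invertible
  refine ((PosDef.fromBlocks₁₁ B D hA).2 hS.posSemidef).posDef_iff_isUnit.2 ?_
  rw [isUnit_fromBlocks_iff_of_invertible₁₁, invOf_eq_nonsing_inv]
  exact hS.isUnit

end Matrix

section

variable {ι : Type*} [Fintype ι]

theorem sq_mulVec_apply_le {M : Matrix ι ι ℝ} (hM : ∀ i j, 0 ≤ M i j) {v : ι → ℝ}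
    (hv : ∀ i, 0 < v i) (x : ι → ℝ) (i : ι) :
    (M *ᵥ x) i ^ 2 ≤ (M *ᵥ v) i * ∑ j, M i j * x j ^ 2 / v j :=
  -- Cauchy–Schwarz with weights `M i j * v j`
  sum_sq_le_sum_mul_sum_of_sq_le_mul _ (fun j _ => mul_nonneg (hM i j) (hv j).le)
    (fun j _ => div_nonneg (mul_nonneg (hM i j) (sq_nonneg _)) (hv j).le)
    (fun j _ => le_of_eq (by field_simp [(hv j).ne']))

theorem sum_div_mul_sq_mulVec_le {M : Matrix ι ι ℝ} (hM : ∀ i j, 0 ≤ M i j) {r : ℝ} (hr : 0 ≤ r)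
    {u v : ι → ℝ} (hu : 0 ≤ u) (hv : ∀ i, 0 < v i) (hMv : M *ᵥ v ≤ r • v)
    (hMu : Mᵀ *ᵥ u ≤ r • u) (x : ι → ℝ) :
    ∑ i, u i / v i * (M *ᵥ x) i ^ 2 ≤ r ^ 2 * ∑ i, u i / v i * x i ^ 2 := by
  have hw : ∀ i, 0 ≤ u i / v i := fun i => div_nonneg (hu i) (hv i).le
  have hq : ∀ j, 0 ≤ x j ^ 2 / v j := fun j => div_nonneg (sq_nonneg _) (hv j).le
  calc ∑ i, u i / v i * (M *ᵥ x) i ^ 2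
      ≤ ∑ i, u i / v i * ((r * v i) * ∑ j, M i j * x j ^ 2 / v j) := by
        gcongr with i
        · exact hw i
        · refine (sq_mulVec_apply_le hM hv x i).trans (mul_le_mul_of_nonneg_right (hMv i) ?_)
          exact sum_nonneg fun j _ => div_nonneg (mul_nonneg (hM i j) (sq_nonneg _)) (hv j).le
    _ = r * ∑ j, (Mᵀ *ᵥ u) j * (x j ^ 2 / v j) := by
        simp only [mulVec, dotProduct, transpose_apply, mul_sum, sum_mul]
        rw [sum_comm]
        refine sum_congr rfl fun j _ => sum_congr rfl fun i _ => ?_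
        field_simp [(hv i).ne']
    _ ≤ r * ∑ j, (r * u j) * (x j ^ 2 / v j) := by
        gcongr with j
        · exact hq j
        · exact hMu j
    _ = r ^ 2 * ∑ i, u i / v i * x i ^ 2 := by
        rw [mul_sum, mul_sum]
        exact sum_congr rfl fun j _ => by ring

variable [DecidableEq ι]

theorem posDef_diagonal_sub_transpose_mul_diagonal_mul {M : Matrix ι ι ℝ}
    (hM : ∀ i j, 0 ≤ M i j) {r : ℝ} (hr₀ : 0 ≤ r) (hr₁ : r < 1) {u v : ι → ℝ}
    (hu : ∀ i, 0 < u i) (hv : ∀ i, 0 < v i) (hMv : M *ᵥ v ≤ r • v) (hMu : Mᵀ *ᵥ u ≤ r • u) :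
    (diagonal (u / v) - Mᵀ * diagonal (u / v) * M).PosDef := by
  have hD : ∀ y : ι → ℝ, y ⬝ᵥ (diagonal (u / v) *ᵥ y) = ∑ i, u i / v i * y i ^ 2 := fun y =>
    sum_congr rfl fun i _ => by simp only [mulVec_diagonal, Pi.div_apply]; ring
  refine .of_dotProduct_mulVec_pos ?_ fun x hx => ?_
  · rw [← conjTranspose_eq_transpose_of_trivial]
    exact (isHermitian_diagonal _).sub
      (isHermitian_conjTranspose_mul_mul M (isHermitian_diagonal _))
  · have hw : ∀ i, 0 < u i / v i := fun i => div_pos (hu i) (hv i)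
    have hxD : 0 < ∑ i, u i / v i * x i ^ 2 := by
      obtain ⟨i, hi⟩ := Function.ne_iff.1 hx
      exact sum_pos' (fun j _ => mul_nonneg (hw j).le (sq_nonneg _))
        ⟨i, mem_univ i, mul_pos (hw i) (pow_two_pos_of_ne_zero hi)⟩
    rw [star_trivial, sub_mulVec, dotProduct_sub, hD, Matrix.mul_assoc, ← mulVec_mulVec,
      ← mulVec_mulVec, dotProduct_mulVec, vecMul_transpose, hD]
    have hr : r ^ 2 < 1 := by nlinarith
    linarith [sum_div_mul_sq_mulVec_le hM hr₀ (fun i => (hu i).le) hv hMv hMu x,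
      mul_lt_mul_of_pos_right hr hxD]

theorem specRad_transpose (M : Matrix ι ι ℝ) : specRad Mᵀ = specRad M := by
  rw [specRad, specRad, transpose_map, spectralRadius, spectralRadius, spectrum_transpose]

section Gelfand

attribute [local instance] Matrix.linftyOpNormedRing Matrix.linftyOpNormedAlgebra

theorem exists_sum_abs_pow_lt_of_specRad_lt {M : Matrix ι ι ℝ} {r : ℝ≥0} (h : specRad M < r) :
    ∃ K, 0 < K ∧ ∀ i, ∑ j, |(M ^ K) i j| < (r : ℝ) ^ K := by
  obtain ⟨K, hK, hKpos⟩ := (((spectrum.pow_nnnorm_pow_one_div_tendsto_nhds_spectralRadius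
    (M.map (algebraMap ℝ ℂ))).eventually_lt_const h).and (Filter.eventually_gt_atTop 0)).exists
  rw [one_div, ENNReal.rpow_inv_lt_iff (by positivity), ENNReal.rpow_natCast,
    ← ENNReal.coe_pow, ENNReal.coe_lt_coe, ← Matrix.map_pow] at hK
  refine ⟨K, hKpos, fun i => ?_⟩
  have hrow : ∑ j, ‖(M ^ K) i j‖₊ ≤ ‖(M ^ K).map (algebraMap ℝ ℂ)‖₊ := by
    rw [linfty_opNNNorm_def]
    simpa [Complex.nnnorm_real] using
      Finset.le_sup (f := fun i => ∑ j, ‖((M ^ K).map (algebraMap ℝ ℂ)) i j‖₊) (mem_univ i)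
  simpa [← NNReal.coe_lt_coe, Real.norm_eq_abs] using hrow.trans_lt hK

end Gelfand

theorem exists_one_le_mulVec_le_of_pow_mulVec_one_le_one {N : Matrix ι ι ℝ}
    (hN : ∀ i j, 0 ≤ N i j) {K : ℕ} (hK : 0 < K) (hNK : N ^ K *ᵥ 1 ≤ 1) :
    ∃ v : ι → ℝ, 1 ≤ v ∧ N *ᵥ v ≤ v := by
  set G := ∑ t ∈ range K, N ^ t
  have hpow_nonneg : ∀ t, 0 ≤ N ^ t *ᵥ 1 := fun t i =>
    sum_nonneg fun j _ => mul_nonneg (pow_apply_nonneg hN t i j) zero_le_one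
  refine ⟨G *ᵥ 1, ?_, ?_⟩
  · rw [sum_mulVec]
    simpa using single_le_sum (fun t _ => hpow_nonneg t) (mem_range.2 hK)
  · -- telescoping: `(N - 1) * G = N ^ K - 1`
    have hNG : N * G = G + (N ^ K - 1) := by rw [← mul_geom_sum, sub_mul, one_mul]; abel
    rw [mulVec_mulVec, hNG, add_mulVec, sub_mulVec, one_mulVec]
    exact add_le_of_nonpos_right (sub_nonpos.2 hNK)

theorem exists_one_le_mulVec_le_smul_of_specRad_lt {M : Matrix ι ι ℝ} (hM : ∀ i j, 0 ≤ M i j)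
    {r : ℝ≥0} (h : specRad M < r) : ∃ v : ι → ℝ, 1 ≤ v ∧ M *ᵥ v ≤ (r : ℝ) • v := by
  obtain ⟨K, hK, hrow⟩ := exists_sum_abs_pow_lt_of_specRad_lt h
  have hr : (0 : ℝ) < r := NNReal.coe_pos.2 (ENNReal.coe_pos.1 (pos_of_gt h))
  have hMK : M ^ K *ᵥ 1 ≤ (r : ℝ) ^ K • 1 := fun i => by
    simpa [mulVec, dotProduct, abs_of_nonneg (pow_apply_nonneg hM K i _)] using (hrow i).le
  obtain ⟨v, hv, hNv⟩ := exists_one_le_mulVec_le_of_pow_mulVec_one_le_one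
    (N := (r : ℝ)⁻¹ • M) (fun i j => mul_nonneg (inv_nonneg.2 hr.le) (hM i j)) hK (by
      rw [smul_pow, smul_mulVec, inv_pow]
      calc ((r : ℝ) ^ K)⁻¹ • (M ^ K *ᵥ 1) ≤ ((r : ℝ) ^ K)⁻¹ • ((r : ℝ) ^ K • 1) :=
            smul_le_smul_of_nonneg_left hMK (by positivity)
        _ = 1 := by rw [smul_smul, inv_mul_cancel₀ (by positivity), one_smul])
  refine ⟨v, hv, ?_⟩
  have := smul_le_smul_of_nonneg_left hNv hr.le
  rwa [smul_mulVec, smul_smul, mul_inv_cancel₀ hr.ne', one_smul] at this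

theorem entAbs_diagonal_mul {p : ι → ℝ} (hp : 0 ≤ p) (B : Matrix ι ι ℝ) :
    entAbs (diagonal p * B) = diagonal p * entAbs B := by
  ext i j
  simp [entAbs, diagonal_mul, abs_mul, abs_of_nonneg (hp i)]

end

theorem abs_schur_implies_lmi {n ny : ℕ}
    (A : Matrix (Fin n) (Fin n) ℝ) (C : Matrix (Fin ny) (Fin n) ℝ)
    (L : Matrix (Fin n) (Fin ny) ℝ)
    (hL : specRad (entAbs (A - L * C)) < 1) :
    ∃ (P : Matrix (Fin n) (Fin n) ℝ) (Y : Matrix (Fin n) (Fin ny) ℝ)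
      (X : Matrix (Fin n) (Fin n) ℝ), P.IsDiag ∧ P.PosDef ∧ Y = P * L ∧ X = entAbs (P * A - Y * C) ∧
      (Matrix.fromBlocks P X Xᵀ P).PosDef ∧
      ∀ i j, |(P * A - Y * C) i j| ≤ X i j := by
  set M := entAbs (A - L * C)
  have hM : ∀ i j, 0 ≤ M i j := fun i j => abs_nonneg _
  obtain ⟨r, hMr, hr1⟩ := ENNReal.lt_iff_exists_nnreal_btwn.1 hL
  obtain ⟨v, hv, hMv⟩ := exists_one_le_mulVec_le_smul_of_specRad_lt hM hMr
  obtain ⟨u, hu, hMu⟩ := exists_one_le_mulVec_le_smul_of_specRad_lt (M := Mᵀ) (fun i j => hM j i)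
    (by rwa [specRad_transpose])
  have hu₀ : ∀ i, 0 < u i := fun i => one_pos.trans_le (hu i)
  have hv₀ : ∀ i, 0 < v i := fun i => one_pos.trans_le (hv i)
  have hp : ∀ i, 0 < (u / v) i := fun i => div_pos (hu₀ i) (hv₀ i)
  set P := diagonal (u / v)
  have hP : P.PosDef := posDef_diagonal_iff.2 hp
  have hX : entAbs (P * A - P * L * C) = P * M := by
    rw [Matrix.mul_assoc, ← Matrix.mul_sub]
    exact entAbs_diagonal_mul (fun i => (hp i).le) _
  refine ⟨P, P * L, _, isDiag_diagonal _, hP, rfl, rfl, ?_, fun i j => le_rfl⟩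
  rw [hX, ← conjTranspose_eq_transpose_of_trivial]
  refine hP.fromBlocks_of_schur ?_
  have hschur : (P * M)ᴴ * P⁻¹ * (P * M) = Mᵀ * P * M := by
    rw [conjTranspose_mul, (isHermitian_diagonal _).eq, Matrix.mul_assoc, ← Matrix.mul_assoc P⁻¹,
      nonsing_inv_mul _ hP.det_pos.ne'.isUnit, Matrix.one_mul,
      conjTranspose_eq_transpose_of_trivial, Matrix.mul_assoc]
  rw [hschur]
  exact posDef_diagonal_sub_transpose_mul_diagonal_mul hM r.2 (by exact_mod_cast hr1) hu₀ hv₀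
    hMv hMu
end
end

section
/- Let {A_i}_{i∈S}, {C_i}_{i∈S} be finite families with A_i ∈ ℝ^{n×n}, C_i ∈ ℝ^{n_y×n}. Suppose there exist matrices L_i ∈ ℝ^{n×n_y}, diagonal positive definite matrices P_i ∈ ℝ^{n×n} with nonnegative entries, and γ > 0 such that |A_i − L_i C_i|ᵀ P_j |A_i − L_i C_i| − P_i ⪯ −γ I for all pairs (i,j) ∈ S². Then the finite set {|A_i − L_i C_i| : i ∈ S} is uniformly exponentially stable, i.e., its joint spectral radius is strictly less than 1. -/
open Matrix Finset

noncomputable section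

/-- Frobenius norm of a real matrix. -/
def frob {m n : Type*} [Fintype m] [Fintype n] (A : Matrix m n ℝ) : ℝ :=
  Real.sqrt (∑ i, ∑ j, (A i j) ^ 2)

/-- Joint spectral radius of a set of real square matrices (via the Frobenius norm). -/
def jsr {n : Type*} [Fintype n] [DecidableEq n] (S : Set (Matrix n n ℝ)) : ℝ :=
  Filter.limsup (fun k : ℕ =>
    (sSup {x : ℝ | ∃ L : List (Matrix n n ℝ), L.length = k ∧ (∀ A ∈ L, A ∈ S) ∧
      x = frob L.prod}) ^ ((1:ℝ) / k)) Filter.atTop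

/-!
The quadratic forms `V i x = x ⬝ᵥ P i *ᵥ x` are multiple Lyapunov functions for the switched
system `x ↦ M i *ᵥ x`, `M i = |A i - L i * C i|`: with `‖x‖² = x ⬝ᵥ x`, the matrix inequality reads
`V j (M i x) + γ ‖x‖² ≤ V i x`. As `V j ≥ 0`, this gives `γ ‖x‖² ≤ V i x`, and for any `β ≥ γ` with
`V i x ≤ β ‖x‖²` (e.g. `β = γ + ∑ |P i a b|`) also `V j (M i x) ≤ (1 - γ / β) V i x`. Along any
product of `k` matrices of the family, `‖M_{i_k} ⋯ M_{i_1} x‖² ≤ (β / γ) (1 - γ / β) ^ k ‖x‖²`,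
so the Frobenius norm of the product is `O((1 - γ / β) ^ (k / 2))` and the joint spectral radius
is at most `√(1 - γ / β) < 1`.
-/

section QuadraticForm

variable {m : Type*} [Fintype m]

lemma dotProduct_mulVec_le_sum_abs_mul (P : Matrix m m ℝ) (x : m → ℝ) :
    x ⬝ᵥ P *ᵥ x ≤ (∑ a, ∑ b, |P a b|) * (x ⬝ᵥ x) := by
  have hsq : ∀ a, x a ^ 2 ≤ x ⬝ᵥ x := fun a => by
    simpa only [dotProduct, sq] using
      single_le_sum (f := fun c => x c * x c) (fun c _ => mul_self_nonneg _) (mem_univ a)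
  have hterm : ∀ a b, x a * (P a b * x b) ≤ |P a b| * (x ⬝ᵥ x) := fun a b => by
    have hxx : |x a * x b| ≤ x ⬝ᵥ x := by
      rw [abs_mul]
      nlinarith [hsq a, hsq b, sq_abs (x a), sq_abs (x b), sq_nonneg (|x a| - |x b|)]
    calc x a * (P a b * x b) ≤ |P a b * (x a * x b)| := by
          rw [show x a * (P a b * x b) = P a b * (x a * x b) by ring]; exact le_abs_self _
      _ = |P a b| * |x a * x b| := abs_mul _ _
      _ ≤ |P a b| * (x ⬝ᵥ x) := mul_le_mul_of_nonneg_left hxx (abs_nonneg _)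
  calc x ⬝ᵥ P *ᵥ x = ∑ a, ∑ b, x a * (P a b * x b) := by simp only [dotProduct, mulVec, mul_sum]
    _ ≤ ∑ a, ∑ b, |P a b| * (x ⬝ᵥ x) := sum_le_sum fun a _ => sum_le_sum fun b _ => hterm a b
    _ = (∑ a, ∑ b, |P a b|) * (x ⬝ᵥ x) := by simp only [sum_mul]

lemma dotProduct_transpose_mul_mul_mulVec {k : Type*} [Fintype k] (M : Matrix k m ℝ)
    (P : Matrix k k ℝ) (x : m → ℝ) :
    x ⬝ᵥ (Mᵀ * P * M) *ᵥ x = (M *ᵥ x) ⬝ᵥ P *ᵥ (M *ᵥ x) := by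
  rw [← mulVec_mulVec, ← mulVec_mulVec, dotProduct_mulVec, vecMul_transpose]

lemma dotProduct_mulVec_add_le_of_posSemidef [DecidableEq m] {k : Type*} [Fintype k]
    {Q : Matrix m m ℝ} {P : Matrix k k ℝ} {M : Matrix k m ℝ} {γ : ℝ}
    (h : (Q - γ • (1 : Matrix m m ℝ) - Mᵀ * P * M).PosSemidef) (x : m → ℝ) :
    (M *ᵥ x) ⬝ᵥ P *ᵥ (M *ᵥ x) + γ * (x ⬝ᵥ x) ≤ x ⬝ᵥ Q *ᵥ x := by
  have hx := h.dotProduct_mulVec_nonneg x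
  rw [star_trivial, sub_mulVec, sub_mulVec, smul_mulVec, one_mulVec, dotProduct_sub,
    dotProduct_sub, dotProduct_smul, smul_eq_mul, dotProduct_transpose_mul_mul_mulVec] at hx
  linarith

end QuadraticForm

lemma frob_le_sqrt_of_forall_dotProduct_mulVec_le {m n : Type*} [Fintype m] [Fintype n]
    [DecidableEq n] (A : Matrix m n ℝ) {K : ℝ}
    (h : ∀ x, A *ᵥ x ⬝ᵥ A *ᵥ x ≤ K * (x ⬝ᵥ x)) : frob A ≤ √(Fintype.card n * K) := by
  refine Real.sqrt_le_sqrt ?_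
  calc ∑ a, ∑ b, A a b ^ 2 = ∑ b, A *ᵥ Pi.single b 1 ⬝ᵥ A *ᵥ Pi.single b 1 := by
        rw [sum_comm]
        simp only [mulVec_single_one, dotProduct, col_apply, sq]
    _ ≤ ∑ _b : n, K := sum_le_sum fun b _ => by simpa using h (Pi.single b 1)
    _ = Fintype.card n * K := by rw [sum_const, card_univ, nsmul_eq_mul]

lemma tendsto_rpow_one_div_natCast {K : ℝ} (hK : 0 < K) :
    Filter.Tendsto (fun k : ℕ => K ^ (1 / (k : ℝ))) Filter.atTop (nhds 1) := by
  have h := (Real.continuousAt_const_rpow hK.ne').tendsto.comp tendsto_one_div_atTop_nhds_zero_nat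
  rwa [Real.rpow_zero] at h

lemma jsr_le_of_frob_listProd_le {m : Type*} [Fintype m] [DecidableEq m]
    {S : Set (Matrix m m ℝ)} {K d : ℝ} (hK : 0 < K) (hd : 0 ≤ d)
    (h : ∀ L : List (Matrix m m ℝ), (∀ A ∈ L, A ∈ S) → frob L.prod ≤ K * d ^ L.length) :
    jsr S ≤ d := by
  set s : ℕ → ℝ := fun k => sSup {x : ℝ | ∃ L : List (Matrix m m ℝ), L.length = k ∧
    (∀ A ∈ L, A ∈ S) ∧ x = frob L.prod}
  have hs_nonneg : ∀ k, 0 ≤ s k := fun k =>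
    Real.sSup_nonneg (by rintro x ⟨L, -, -, rfl⟩; exact Real.sqrt_nonneg _)
  have hs_le : ∀ k, s k ≤ K * d ^ k := fun k =>
    Real.sSup_le (by rintro x ⟨L, rfl, hL, rfl⟩; exact h L hL) (by positivity)
  have hlim : Filter.Tendsto (fun k : ℕ => K ^ (1 / (k : ℝ)) * d) Filter.atTop (nhds d) := by
    simpa using (tendsto_rpow_one_div_natCast hK).mul_const d
  have hev : (fun k : ℕ => s k ^ (1 / (k : ℝ))) ≤ᶠ[Filter.atTop]
      fun k => K ^ (1 / (k : ℝ)) * d := by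
    filter_upwards [Filter.eventually_ne_atTop 0] with k hk
    calc s k ^ (1 / (k : ℝ)) ≤ (K * d ^ k) ^ (1 / (k : ℝ)) :=
          Real.rpow_le_rpow (hs_nonneg k) (hs_le k) (by positivity)
      _ = K ^ (1 / (k : ℝ)) * d := by
          rw [Real.mul_rpow hK.le (by positivity), one_div, Real.pow_rpow_inv_natCast hd hk]
  calc jsr S ≤ Filter.limsup (fun k : ℕ => K ^ (1 / (k : ℝ)) * d) Filter.atTop :=
        Filter.limsup_le_limsup hev
          (Filter.isCoboundedUnder_le_of_le _ fun k => Real.rpow_nonneg (hs_nonneg k) _)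
          hlim.isBoundedUnder_le
    _ = d := hlim.limsup_eq

section MultipleLyapunov

variable {ι m : Type*} [Fintype m] [DecidableEq m] {M : ι → Matrix m m ℝ}
  {V : ι → (m → ℝ) → ℝ} {c β γ : ℝ}

lemma lyapunov_listProd_mulVec_le (hc : 0 ≤ c) (hdecay : ∀ i j x, V j (M i *ᵥ x) ≤ c * V i x)
    (hup : ∀ i x, V i x ≤ β * (x ⬝ᵥ x)) (l : List ι) (j : ι) (x : m → ℝ) :
    V j ((l.map M).prod *ᵥ x) ≤ c ^ l.length * (β * (x ⬝ᵥ x)) := by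
  induction l generalizing j with
  | nil => simpa using hup j x
  | cons i l ih =>
    rw [List.map_cons, List.prod_cons, ← mulVec_mulVec]
    calc V j (M i *ᵥ ((l.map M).prod *ᵥ x)) ≤ c * V i ((l.map M).prod *ᵥ x) := hdecay i j _
      _ ≤ c * (c ^ l.length * (β * (x ⬝ᵥ x))) := mul_le_mul_of_nonneg_left (ih i) hc
      _ = c ^ (i :: l).length * (β * (x ⬝ᵥ x)) := by rw [List.length_cons, pow_succ']; ring

lemma dotProduct_listProd_mulVec_le (hc : 0 ≤ c) (hdecay : ∀ i j x, V j (M i *ᵥ x) ≤ c * V i x)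
    (hlow : ∀ i x, γ * (x ⬝ᵥ x) ≤ V i x) (hup : ∀ i x, V i x ≤ β * (x ⬝ᵥ x)) (hγβ : γ ≤ β)
    (l : List ι) (x : m → ℝ) :
    γ * ((l.map M).prod *ᵥ x ⬝ᵥ (l.map M).prod *ᵥ x) ≤ c ^ l.length * (β * (x ⬝ᵥ x)) := by
  cases l with
  | nil => simpa using mul_le_mul_of_nonneg_right hγβ (dotProduct_self_star_nonneg x)
  | cons i l => exact (hlow i _).trans (lyapunov_listProd_mulVec_le hc hdecay hup _ i x)

lemma jsr_range_le_sqrt_of_lyapunov (hγ : 0 < γ) (hγβ : γ ≤ β) (hc : 0 ≤ c)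
    (hdecay : ∀ i j x, V j (M i *ᵥ x) ≤ c * V i x)
    (hlow : ∀ i x, γ * (x ⬝ᵥ x) ≤ V i x) (hup : ∀ i x, V i x ≤ β * (x ⬝ᵥ x)) :
    jsr (Set.range M) ≤ √c := by
  set K := √(Fintype.card m * (β / γ))
  refine jsr_le_of_frob_listProd_le (K := K + 1) (by positivity) (Real.sqrt_nonneg c) ?_
  intro L hL
  obtain ⟨l, rfl⟩ : L ∈ Set.range (List.map M) := by rwa [Set.range_list_map]
  have hnorm : ∀ x, (l.map M).prod *ᵥ x ⬝ᵥ (l.map M).prod *ᵥ x ≤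
      β / γ * c ^ l.length * (x ⬝ᵥ x) := fun x => by
    rw [div_mul_eq_mul_div, div_mul_eq_mul_div, le_div_iff₀ hγ]
    linarith [dotProduct_listProd_mulVec_le hc hdecay hlow hup hγβ l x]
  calc frob (l.map M).prod ≤ √(Fintype.card m * (β / γ * c ^ l.length)) :=
        frob_le_sqrt_of_forall_dotProduct_mulVec_le _ hnorm
    _ = K * √c ^ l.length := by
        have hβ : 0 ≤ β := hγ.le.trans hγβ
        have hpow : √(c ^ l.length) = √c ^ l.length := by
          rw [← Real.sqrt_sq (pow_nonneg (Real.sqrt_nonneg c) _), ← pow_mul, mul_comm, pow_mul,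
            Real.sq_sqrt hc]
        rw [← mul_assoc, Real.sqrt_mul (by positivity), hpow]
    _ ≤ (K + 1) * √c ^ (l.map M).length := by
        rw [List.length_map]; gcongr; linarith

lemma jsr_range_lt_one_of_lyapunov (hγ : 0 < γ) (hγβ : γ ≤ β) (hV : ∀ i x, 0 ≤ V i x)
    (hstep : ∀ i j x, V j (M i *ᵥ x) + γ * (x ⬝ᵥ x) ≤ V i x)
    (hup : ∀ i x, V i x ≤ β * (x ⬝ᵥ x)) :
    jsr (Set.range M) < 1 := by
  have hβ : 0 < β := hγ.trans_le hγβ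
  have hdecay : ∀ i j x, V j (M i *ᵥ x) ≤ (1 - γ / β) * V i x := fun i j x => by
    have : γ / β * V i x ≤ γ * (x ⬝ᵥ x) := by
      rw [div_mul_eq_mul_div, div_le_iff₀ hβ, mul_assoc]
      exact mul_le_mul_of_nonneg_left ((hup i x).trans_eq (mul_comm _ _)) hγ.le
    linarith [hstep i j x]
  have hlow : ∀ i x, γ * (x ⬝ᵥ x) ≤ V i x := fun i x => by
    linarith [hstep i i x, hV i (M i *ᵥ x)]
  calc jsr (Set.range M) ≤ √(1 - γ / β) := jsr_range_le_sqrt_of_lyapunov hγ hγβ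
        (sub_nonneg.2 (div_le_one_of_le₀ hγβ hβ.le)) hdecay hlow hup
    _ < 1 := by
      rw [Real.sqrt_lt' one_pos, one_pow]
      exact sub_lt_self 1 (div_pos hγ hβ)

end MultipleLyapunov

theorem switched_lyapunov_jsr_lt_one_general {n ny : ℕ} {ι : Type*} [Fintype ι]
    (A : ι → Matrix (Fin n) (Fin n) ℝ) (C : ι → Matrix (Fin ny) (Fin n) ℝ)
    (L : ι → Matrix (Fin n) (Fin ny) ℝ) (P : ι → Matrix (Fin n) (Fin n) ℝ)
    (γ : ℝ) (hγ : 0 < γ)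
    (hPdef : ∀ i, (P i).PosDef)
    (hlyap : ∀ i j, (P i - γ • (1 : Matrix (Fin n) (Fin n) ℝ) -
      (entAbs (A i - L i * C i))ᵀ * P j * entAbs (A i - L i * C i)).PosSemidef) :
    jsr (Set.range fun i => entAbs (A i - L i * C i)) < 1 := by
  have hbound : ∀ i, ∑ a, ∑ b, |P i a b| ≤ ∑ k, ∑ a, ∑ b, |P k a b| := fun i =>
    single_le_sum (f := fun k => ∑ a, ∑ b, |P k a b|) (fun _ _ => by positivity) (mem_univ i)
  refine jsr_range_lt_one_of_lyapunov (V := fun i x => x ⬝ᵥ P i *ᵥ x)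
    (β := γ + ∑ k, ∑ a, ∑ b, |P k a b|) hγ (le_add_of_nonneg_right (by positivity))
    (fun i x => by simpa using (hPdef i).posSemidef.dotProduct_mulVec_nonneg x)
    (fun i j x => dotProduct_mulVec_add_le_of_posSemidef (hlyap i j) x) (fun i x => ?_)
  refine (dotProduct_mulVec_le_sum_abs_mul (P i) x).trans ?_
  exact mul_le_mul_of_nonneg_right (le_add_of_nonneg_of_le hγ.le (hbound i))
    (dotProduct_self_star_nonneg x)

theorem switched_lyapunov_jsr_lt_one {n ny : ℕ} {ι : Type*} [Fintype ι]
    (A : ι → Matrix (Fin n) (Fin n) ℝ) (C : ι → Matrix (Fin ny) (Fin n) ℝ)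
    (L : ι → Matrix (Fin n) (Fin ny) ℝ) (P : ι → Matrix (Fin n) (Fin n) ℝ)
    (γ : ℝ) (hγ : 0 < γ)
    (hPdiag : ∀ i, (P i).IsDiag) (hPdef : ∀ i, (P i).PosDef)
    (hPnn : ∀ i a b, 0 ≤ P i a b)
    (hlyap : ∀ i j, (P i - γ • (1 : Matrix (Fin n) (Fin n) ℝ) -
      (entAbs (A i - L i * C i))ᵀ * P j * entAbs (A i - L i * C i)).PosSemidef) :
    jsr (Set.range fun i => entAbs (A i - L i * C i)) < 1 :=
  switched_lyapunov_jsr_lt_one_general A C L P γ hγ hPdef hlyap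
end
end
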